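/- arXiv:1305.4638 — 5 statements merged into one kernel-verified Lean document; each statement's English description precedes it below -/
import Mathlib

section
/- Let A be a connected topological abelian group (written additively) and let θ : A → A be a continuous group automorphism with θ ∘ θ = id. Let A^θ = {x ∈ A : θ(x) = x} be the fixed subgroup. Then for every x ∈ A^θ, the element x + x lies in the connected component of 0 in A^θ. Consequently, every element of the component group A^θ/(A^θ)₀ has order dividing 2, where (A^θ)₀ is the connected component of 0 in A^θ. -/
/-! The map `a ↦ a + θ a` sends the connected group `A` continuously into `A^θ`, so its image
is a connected subset of `A^θ` containing `0 + θ 0 = 0`; for a fixed `x` it contains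
`x + θ x = x + x`. -/

open Set

theorem Continuous.range_subset_connectedComponentIn {X Y : Type*} [TopologicalSpace X]
    [PreconnectedSpace X] [TopologicalSpace Y] {f : X → Y} (hf : Continuous f) {S : Set Y}
    (hS : range f ⊆ S) (x : X) : range f ⊆ connectedComponentIn S (f x) :=
  (isPreconnected_range hf).subset_connectedComponentIn (mem_range_self x) hS

theorem AddMonoidHom.map_add_apply_self_of_involutive {M : Type*} [AddCommMonoid M]
    (θ : M →+ M) (hθθ : ∀ a, θ (θ a) = a) (a : M) : θ (a + θ a) = a + θ a := by
  rw [map_add, hθθ, add_comm]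

/-- Let `A` be a connected topological abelian group and `θ : A → A` a continuous group
automorphism with `θ ∘ θ = id`. Then for every `x` in the fixed subgroup
`A^θ = {a : A | θ a = a}`, the element `x + x` lies in the connected component of `0`
in `A^θ` (with the subspace topology); equivalently, every element of the component group
`A^θ/(A^θ)₀` has order dividing `2`. -/
theorem stmt3 {A : Type*} [AddCommGroup A] [TopologicalSpace A] [IsTopologicalAddGroup A]
    [ConnectedSpace A] (θ : A →+ A) (hθc : Continuous θ) (hθθ : ∀ a, θ (θ a) = a) :
    ∀ x : A, θ x = x → x + x ∈ connectedComponentIn {a : A | θ a = a} 0 := by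
  intro x hx
  have hrange : range (fun a => a + θ a) ⊆ {a : A | θ a = a} := by
    rintro _ ⟨a, rfl⟩
    exact θ.map_add_apply_self_of_involutive hθθ a
  have hcont : Continuous fun a => a + θ a := continuous_id.add hθc
  have hcomp := hcont.range_subset_connectedComponentIn hrange 0
  simp only [map_zero, add_zero] at hcomp
  exact hcomp ⟨x, congrArg (x + ·) hx⟩
end

section
/- Let V be a finite-dimensional complex vector space, let Λ ⊂ V be a ℤ-lattice of the underlying real vector space of V (a discrete additive subgroup spanning V over ℝ), and let C : V → V be a conjugate-linear involution with C(Λ) = Λ. Then the subgroup Λ ∩ V^C spans V^C over ℝ, where V^C = {v ∈ V : C(v) = v}; that is, Λ ∩ V^C is a full ℤ-lattice in the real vector space V^C. -/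
/-!
Every `C`-fixed vector `v` is the average `(v + C v) / 2`. Since `v` is a real combination of
lattice vectors `λᵢ`, and `C` is `ℝ`-linear, `v + C v` is the same combination of the vectors
`λᵢ + C λᵢ`, which lie in `Λ` and are fixed by `C`.
-/

section InvolutionFixedSpan

variable {R M : Type*} [Semiring R] [AddCommMonoid M] [Module R M]

theorem add_apply_mem_span_inter_fixed (T : M →ₗ[R] M) (hT : ∀ v, T (T v) = v)
    (S : AddSubmonoid M) (hTS : ∀ v ∈ S, T v ∈ S) {w : M} (hw : w ∈ Submodule.span R (S : Set M)) :
    w + T w ∈ Submodule.span R ((S : Set M) ∩ {v | T v = v}) := by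
  have himage : (LinearMap.id + T : M →ₗ[R] M) '' (S : Set M) ⊆ (S : Set M) ∩ {v | T v = v} := by
    rintro _ ⟨x, hx, rfl⟩
    refine ⟨S.add_mem hx (hTS x hx), ?_⟩
    simp only [Set.mem_ofPred_eq, LinearMap.add_apply, LinearMap.id_apply, map_add, hT, add_comm]
  have hmap := Submodule.mem_map_of_mem (f := LinearMap.id + T) hw
  rw [Submodule.map_span] at hmap
  exact Submodule.span_mono himage hmap

theorem mem_span_inter_fixed_of_mem_span [Invertible (2 : R)] (T : M →ₗ[R] M)
    (hT : ∀ v, T (T v) = v) (S : AddSubmonoid M) (hTS : ∀ v ∈ S, T v ∈ S) {v : M}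
    (hv : v ∈ Submodule.span R (S : Set M)) (hfix : T v = v) :
    v ∈ Submodule.span R ((S : Set M) ∩ {v | T v = v}) := by
  have hsum := add_apply_mem_span_inter_fixed T hT S hTS hv
  rw [hfix] at hsum
  have hhalf : v = (⅟2 : R) • (v + v) := by
    rw [← two_smul R v, smul_smul, invOf_mul_self, one_smul]
  rw [hhalf]
  exact Submodule.smul_mem _ _ hsum

end InvolutionFixedSpan

def LinearMap.conjRealLinear {V : Type*} [AddCommGroup V] [Module ℂ V]
    (C : V →ₛₗ[starRingEnd ℂ] V) : V →ₗ[ℝ] V where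
  toFun := C
  map_add' := C.map_add
  map_smul' a x := by
    rw [← algebraMap_smul ℂ a x, C.map_smulₛₗ]
    simp

theorem stmt6_general {V : Type*} [NormedAddCommGroup V] [NormedSpace ℂ V]
    (Λ : AddSubgroup V)
    (hspan : Submodule.span ℝ (Λ : Set V) = ⊤)
    (C : V →ₛₗ[starRingEnd ℂ] V) (hC : ∀ v, C (C v) = v)
    (hCΛ : ∀ v, v ∈ Λ ↔ C v ∈ Λ) :
    Submodule.span ℝ ((Λ : Set V) ∩ {v | C v = v}) = Submodule.span ℝ {v | C v = v} := by
  refine le_antisymm (Submodule.span_mono Set.inter_subset_right) ?_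
  rw [Submodule.span_le]
  intro v hv
  exact mem_span_inter_fixed_of_mem_span C.conjRealLinear hC Λ.toAddSubmonoid
    (fun w hw ↦ (hCΛ w).mp hw) (hspan ▸ Submodule.mem_top) hv

/-- Let `V` be a finite-dimensional complex vector space, `Λ ⊂ V` a `ℤ`-lattice of the
underlying real vector space (a discrete additive subgroup spanning `V` over `ℝ`), and
`C : V → V` a conjugate-linear involution with `C(Λ) = Λ`. Then `Λ ∩ V^C` spans
`V^C = {v | C v = v}` over `ℝ`, i.e. it is a full `ℤ`-lattice in `V^C`. -/
theorem stmt6 {V : Type*} [NormedAddCommGroup V] [NormedSpace ℂ V] [FiniteDimensional ℂ V]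
    (Λ : AddSubgroup V) (hdisc : DiscreteTopology Λ)
    (hspan : Submodule.span ℝ (Λ : Set V) = ⊤)
    (C : V →ₛₗ[starRingEnd ℂ] V) (hC : ∀ v, C (C v) = v)
    (hCΛ : ∀ v, v ∈ Λ ↔ C v ∈ Λ) :
    Submodule.span ℝ ((Λ : Set V) ∩ {v | C v = v}) = Submodule.span ℝ {v | C v = v} :=
  stmt6_general Λ hspan C hC hCΛ
end

section
/- Let V be a finite-dimensional complex vector space, let Λ ⊂ V be a ℤ-lattice of the underlying real vector space of V (a discrete additive subgroup spanning V over ℝ), and let C : V → V be a conjugate-linear involution with C(Λ) = Λ. Let q : V → V⧸Λ be the quotient homomorphism (with V⧸Λ carrying the quotient topology) and let θ : V⧸Λ → V⧸Λ be the induced map θ(q(v)) = q(C(v)), which is well defined since C(Λ) = Λ. Let F = {x ∈ V⧸Λ : θ(x) = x} be the fixed subgroup. Then the connected component of 0 in F equals the image q(V^C), where V^C = {v ∈ V : C(v) = v}. -/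
/-!
The image `q(V^C)` of the real subspace `V^C` is connected and lies in the fixed subgroup `F`.
It is also relatively clopen in `F`, because points of `F` that are close to `q(V^C)` lie in it:
if `q v ∈ F` is within `r` of `q u` with `C u = u`, lift it to `v = u + w` with `‖w‖ < r`; then
`C v - v = C w - w` lies in `Λ` and, for `r` small, is shorter than every nonzero vector of the
discrete group `Λ`, so it vanishes.
-/

open Metric

theorem AddSubgroup.exists_pos_forall_norm_lt_eq_zero {E : Type*} [SeminormedAddCommGroup E]
    (Λ : AddSubgroup E) [DiscreteTopology Λ] : ∃ ε > 0, ∀ v ∈ Λ, ‖v‖ < ε → v = 0 := by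
  obtain ⟨ε, hε, hΛ⟩ := isOpen_singleton_iff.mp (isOpen_discrete ({0} : Set Λ))
  exact ⟨ε, hε, fun v hv hvε ↦ congrArg Subtype.val (hΛ ⟨v, hv⟩ (by simpa using hvε))⟩

theorem connectedComponentIn_eq_of_inter_thickening_subset {X : Type*} [PseudoMetricSpace X]
    {F T : Set X} {x : X} {r : ℝ} (hr : 0 < r) (hTF : T ⊆ F) (hT : IsPreconnected T)
    (hx : x ∈ T) (hsep : F ∩ thickening r T ⊆ T) : connectedComponentIn F x = T := by
  refine Set.Subset.antisymm ?_ (hT.subset_connectedComponentIn hx hTF)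
  have hKF : connectedComponentIn F x ⊆ F := connectedComponentIn_subset F x
  -- The closure of the `r / 2`-thickening stays inside the `r`-thickening, where `hsep` applies.
  have hK : connectedComponentIn F x ⊆ thickening (r / 2) T := by
    refine isPreconnected_connectedComponentIn.subset_of_closure_inter_subset isOpen_thickening
      ⟨x, mem_connectedComponentIn (hTF hx), self_subset_thickening (half_pos hr) T hx⟩ ?_
    rintro y ⟨hy, hyK⟩
    have hyr : y ∈ thickening r T :=
      cthickening_subset_thickening' hr (half_lt_self hr) T
        (closure_thickening_subset_cthickening _ T hy)
    exact self_subset_thickening (half_pos hr) T (hsep ⟨hKF hyK, hyr⟩)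
  exact fun y hy ↦ hsep ⟨hKF hy, thickening_mono (half_le_self hr.le) T (hK hy)⟩

theorem QuotientAddGroup.inter_thickening_image_fixedPoints_subset {E : Type*}
    [SeminormedAddCommGroup E] {Λ : AddSubgroup E} {F : Set (E ⧸ Λ)} (f : E →+ E)
    (hF : ∀ v : E, (v : E ⧸ Λ) ∈ F → f v - v ∈ Λ) {ε r : ℝ}
    (hΛ : ∀ v ∈ Λ, ‖v‖ < ε → v = 0) (hf : ∀ w, ‖w‖ < r → ‖f w - w‖ < ε) :
    F ∩ thickening r ((↑) '' {v | f v = v}) ⊆ (↑) '' {v | f v = v} := by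
  rintro x ⟨hxF, hx⟩
  obtain ⟨_, ⟨u, hu, rfl⟩, hxu⟩ := mem_thickening_iff.mp hx
  induction x using QuotientAddGroup.induction_on with | H v => ?_
  rw [dist_eq_norm, ← QuotientAddGroup.mk_sub] at hxu
  obtain ⟨w, hw, hwr⟩ := QuotientAddGroup.norm_lt_iff.mp hxu
  have hv : ((u + w : E) : E ⧸ Λ) = v := by
    rw [QuotientAddGroup.mk_add, hw, QuotientAddGroup.mk_sub, add_sub_cancel]
  have hfix : f (u + w) - (u + w) = f w - w := by
    rw [map_add, show f u = u from hu]; abel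
  have hw0 : f w - w = 0 := hΛ _ (hfix ▸ hF _ (hv ▸ hxF)) (hf w hwr)
  exact ⟨u + w, sub_eq_zero.mp (hfix.trans hw0), hv⟩

theorem QuotientAddGroup.connectedComponentIn_fixedPoints_eq_image {E : Type*}
    [SeminormedAddCommGroup E] [NormedSpace ℝ E] (Λ : AddSubgroup E) [DiscreteTopology Λ]
    (f : E →L[ℝ] E) (θ : E ⧸ Λ → E ⧸ Λ) (hθ : ∀ v : E, θ v = f v) :
    connectedComponentIn {x | θ x = x} 0 = (↑) '' {v | f v = v} := by
  obtain ⟨ε, hε, hΛ⟩ := Λ.exists_pos_forall_norm_lt_eq_zero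
  obtain ⟨r, hr, hf⟩ : ∃ r > 0, ∀ w : E, ‖w‖ < r → ‖f w - w‖ < ε := by
    simpa using continuous_iff.mp (f - 1).continuous 0 ε hε
  have hF : ∀ v : E, θ v = v ↔ f v - v ∈ Λ := fun v ↦ by
    rw [hθ, QuotientAddGroup.eq_iff_sub_mem]
  refine connectedComponentIn_eq_of_inter_thickening_subset hr ?_ ?_ ⟨0, by simp, rfl⟩
    (inter_thickening_image_fixedPoints_subset f.toLinearMap.toAddMonoidHom
      (fun v ↦ (hF v).mp) hΛ hf)
  · rintro _ ⟨v, hv, rfl⟩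
    exact (hF v).mpr (by simp [show f v = v from hv])
  · have hker : {v | f v = v} = ((f - 1 : E →L[ℝ] E).ker : Set E) := by
      ext v; simp [sub_eq_zero]
    rw [hker]
    exact (Submodule.convex _).isPreconnected.image _ continuous_quot_mk.continuousOn

def LinearMap.conjToRealLinearMap {V W : Type*} [AddCommGroup V] [Module ℂ V] [AddCommGroup W]
    [Module ℂ W] (C : V →ₛₗ[starRingEnd ℂ] W) : V →ₗ[ℝ] W where
  toFun := C
  map_add' := C.map_add
  map_smul' r v := by
    rw [RingHom.id_apply, ← Complex.coe_smul, map_smulₛₗ, Complex.conj_ofReal, Complex.coe_smul]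

theorem stmt8_general {V : Type*} [NormedAddCommGroup V] [NormedSpace ℂ V] [FiniteDimensional ℂ V]
    (Λ : AddSubgroup V) (hdisc : DiscreteTopology Λ)
    (C : V →ₛₗ[starRingEnd ℂ] V)
    (θ : V ⧸ Λ → V ⧸ Λ)
    (hθ : ∀ v : V, θ (QuotientAddGroup.mk v) = QuotientAddGroup.mk (C v)) :
    connectedComponentIn {x : V ⧸ Λ | θ x = x} 0 =
      QuotientAddGroup.mk '' {v : V | C v = v} := by
  have := hdisc
  exact QuotientAddGroup.connectedComponentIn_fixedPoints_eq_image Λ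
    (LinearMap.toContinuousLinearMap C.conjToRealLinearMap) θ hθ

/-- Let `V` be a finite-dimensional complex vector space, `Λ ⊂ V` a `ℤ`-lattice of the
underlying real vector space, and `C : V → V` a conjugate-linear involution with
`C(Λ) = Λ`. Let `q : V → V⧸Λ` be the quotient map and `θ : V⧸Λ → V⧸Λ` the induced map
`θ(q v) = q (C v)`. Then the connected component of `0` in the fixed subgroup
`F = {x ∈ V⧸Λ : θ x = x}` equals the image `q(V^C)` of the fixed subspace
`V^C = {v | C v = v}`. -/
theorem stmt8 {V : Type*} [NormedAddCommGroup V] [NormedSpace ℂ V] [FiniteDimensional ℂ V]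
    (Λ : AddSubgroup V) (hdisc : DiscreteTopology Λ)
    (hspan : Submodule.span ℝ (Λ : Set V) = ⊤)
    (C : V →ₛₗ[starRingEnd ℂ] V) (hC : ∀ v, C (C v) = v)
    (hCΛ : ∀ v, v ∈ Λ ↔ C v ∈ Λ)
    (θ : V ⧸ Λ → V ⧸ Λ)
    (hθ : ∀ v : V, θ (QuotientAddGroup.mk v) = QuotientAddGroup.mk (C v)) :
    connectedComponentIn {x : V ⧸ Λ | θ x = x} 0 =
      QuotientAddGroup.mk '' {v : V | C v = v} :=
  stmt8_general Λ hdisc C θ hθ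
end

section
/- Let M ∈ GL(2,ℂ) satisfy conj(M)·M = I, where conj(M) denotes the entrywise complex conjugate of M. Then there exists A ∈ GL(2,ℂ) such that M = conj(A)⁻¹·A. -/
/-!
Hilbert 90 for the conjugation on `ℂ`: if `conj M * M = 1` then `A = conj c • M + c • 1` satisfies
`conj A * M = A`, so `M = conj A⁻¹ * A` as soon as `A` is invertible. For `c = 1 + t * I` with `t`
real, `det A` is a polynomial in `t`, and it is not the zero polynomial because at `t = I` it is
`det (2 • M) ≠ 0`; hence some real `t` gives an invertible `A`.
-/

namespace Matrix

open Polynomial in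
theorem exists_mem_det_smul_add_ne_zero {n R : Type*} [Fintype n] [DecidableEq n]
    [CommRing R] [IsDomain R] {S : Set R} (hS : S.Infinite) (A B : Matrix n n R) {z : R}
    (hz : (z • A + B).det ≠ 0) : ∃ t ∈ S, (t • A + B).det ≠ 0 := by
  set p : R[X] := det ((X : R[X]) • A.map C + B.map C)
  have eval_p (t : R) : p.eval t = (t • A + B).det := by
    rw [← coe_evalRingHom, RingHom.map_det]
    congr 1
    ext i j
    simp only [RingHom.mapMatrix_apply, map_apply, add_apply, smul_apply, smul_eq_mul,
      coe_evalRingHom, eval_add, eval_mul, eval_X, eval_C]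
  have hp : p ≠ 0 := fun hp ↦ hz (by rw [← eval_p, hp, eval_zero])
  by_contra! hS_roots
  exact hp <| eq_zero_of_infinite_isRoot p <| hS.mono fun t ht ↦ by
    rw [Set.mem_ofPred_eq, IsRoot, eval_p, hS_roots t ht]

section StarRing

variable {n R : Type*} [Fintype n] [DecidableEq n] [CommRing R] [StarRing R]

theorem isUnit_det_of_map_star_mul_eq_one {M : Matrix n n R}
    (h : M.map (starRingEnd R) * M = 1) : IsUnit M.det :=
  IsUnit.of_mul_eq_one_right _ (by rw [← det_mul, h, det_one])

theorem eq_map_star_inv_mul_of_map_star_mul_eq_one {M : Matrix n n R}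
    (h : M.map (starRingEnd R) * M = 1) (c : R)
    (hc : IsUnit (star c • M + c • (1 : Matrix n n R)).det) :
    M = ((star c • M + c • 1).map (starRingEnd R))⁻¹ * (star c • M + c • 1) := by
  set A := star c • M + c • (1 : Matrix n n R)
  have hA_map : A.map (starRingEnd R) = c • M.map (starRingEnd R) + star c • 1 := by
    ext i j
    by_cases hij : i = j <;> simp [A, hij, starRingEnd_apply, mul_comm]
  have hA : A.map (starRingEnd R) * M = A := by
    rw [hA_map, add_mul, smul_mul_assoc, smul_mul_assoc, h, one_mul, add_comm]
  have hA_map_det : IsUnit (A.map (starRingEnd R)).det := by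
    simpa [RingHom.map_det] using hc.map (starRingEnd R)
  rw [← nonsing_inv_mul_cancel_left _ M hA_map_det, hA]

end StarRing

variable {n : Type*} [Fintype n] [DecidableEq n]

theorem exists_isUnit_det_conj_smul_add_smul_one {M : Matrix n n ℂ}
    (h : M.map (starRingEnd ℂ) * M = 1) :
    ∃ c : ℂ, IsUnit (star c • M + c • (1 : Matrix n n ℂ)).det := by
  have hM := isUnit_det_of_map_star_mul_eq_one h
  -- For `c = 1 + t * I`, `t` real, the matrix is `t • (I • (1 - M)) + (M + 1)`;
  -- at the nonreal point `t = I` it becomes `2 • M`.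
  have h_at_I : (Complex.I • Complex.I • (1 - M) + (M + 1)).det ≠ 0 := by
    rw [smul_smul, Complex.I_mul_I, show (-1 : ℂ) • (1 - M) + (M + 1) = (2 : ℂ) • M by module,
      det_smul]
    exact mul_ne_zero (pow_ne_zero _ two_ne_zero) hM.ne_zero
  obtain ⟨_, ⟨t, rfl⟩, ht⟩ := exists_mem_det_smul_add_ne_zero
    (Set.infinite_range_of_injective Complex.ofReal_injective) _ _ h_at_I
  refine ⟨1 + t * Complex.I, isUnit_iff_ne_zero.mpr ?_⟩
  convert ht using 2
  simp only [star_add, star_one, star_mul', Complex.star_def, Complex.conj_ofReal, Complex.conj_I]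
  module

theorem exists_isUnit_det_eq_map_conj_inv_mul {M : Matrix n n ℂ}
    (h : M.map (starRingEnd ℂ) * M = 1) :
    ∃ A : Matrix n n ℂ, IsUnit A.det ∧ M = (A.map (starRingEnd ℂ))⁻¹ * A :=
  let ⟨c, hc⟩ := exists_isUnit_det_conj_smul_add_smul_one h
  ⟨_, hc, eq_map_star_inv_mul_of_map_star_mul_eq_one h c hc⟩

end Matrix

theorem stmt10_general (M : Matrix (Fin 2) (Fin 2) ℂ)
    (h : M.map (starRingEnd ℂ) * M = 1) :
    ∃ A : Matrix (Fin 2) (Fin 2) ℂ, IsUnit A.det ∧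
      M = (A.map (starRingEnd ℂ))⁻¹ * A :=
  Matrix.exists_isUnit_det_eq_map_conj_inv_mul h

/-- If `M ∈ GL(2,ℂ)` satisfies `conj(M)·M = I`, then `M = conj(A)⁻¹·A` for some
`A ∈ GL(2,ℂ)`. -/
theorem stmt10 (M : Matrix (Fin 2) (Fin 2) ℂ) (hM : IsUnit M.det)
    (h : M.map (starRingEnd ℂ) * M = 1) :
    ∃ A : Matrix (Fin 2) (Fin 2) ℂ, IsUnit A.det ∧
      M = (A.map (starRingEnd ℂ))⁻¹ * A :=
  stmt10_general M h
end

section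
/- Let M ∈ GL(2,ℂ) satisfy conj(M)·M = −I, where conj(M) denotes the entrywise complex conjugate of M. Let J ∈ GL(2,ℂ) be the matrix with rows (0, 1) and (−1, 0). Then there exists A ∈ GL(2,ℂ) such that M = conj(A)⁻¹·J·A. -/
/-!
Let `σ x = conj(x) * M` act on row vectors; then `σ (σ x) = x * conj(M) * M = -x`.
Any `A` whose rows are `x, σ x` therefore satisfies `conj(A) * M = J * A`. For `x = e₀` the rows
are `(1, 0)` and `(M 0 0, M 0 1)`, independent because `M 0 1 = 0` would force `|M 0 0|² = -1`.
-/

open Matrix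

section CommRing

variable {R : Type*} [CommRing R] [StarRing R]

theorem Matrix.isUnit_det_map_starRingEnd {n : Type*} [Fintype n] [DecidableEq n]
    {A : Matrix n n R} (hA : IsUnit A.det) : IsUnit (A.map (starRingEnd R)).det := by
  rw [← RingHom.mapMatrix_apply, ← RingHom.map_det]
  exact hA.map _

theorem Matrix.map_starRingEnd_mul_eq_J_mul {M : Matrix (Fin 2) (Fin 2) R}
    (h : M.map (starRingEnd R) * M = -1) :
    !![1, 0; M 0 0, M 0 1].map (starRingEnd R) * M = !![0, 1; -1, 0] * !![1, 0; M 0 0, M 0 1] := by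
  have h00 := congrFun (congrFun h 0) 0
  have h01 := congrFun (congrFun h 0) 1
  simp only [mul_apply, Fin.sum_univ_two, map_apply, neg_apply, one_apply_eq,
    one_apply_ne zero_ne_one] at h00 h01
  ext i j
  fin_cases i <;> fin_cases j <;> simp [mul_apply, Fin.sum_univ_two, h00, h01]

end CommRing

theorem Matrix.apply_zero_one_ne_zero_of_map_starRingEnd_mul_self_eq_neg_one
    {𝕜 : Type*} [RCLike 𝕜] {M : Matrix (Fin 2) (Fin 2) 𝕜}
    (h : M.map (starRingEnd 𝕜) * M = -1) : M 0 1 ≠ 0 := by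
  intro h01
  have h00 := congrFun (congrFun h 0) 0
  simp only [mul_apply, Fin.sum_univ_two, map_apply, h01, map_zero, zero_mul, add_zero,
    RCLike.conj_mul, neg_apply, one_apply_eq] at h00
  have : ‖M 0 0‖ ^ 2 = -1 := by exact_mod_cast h00
  linarith [sq_nonneg ‖M 0 0‖]

theorem stmt11_general (M : Matrix (Fin 2) (Fin 2) ℂ)
    (h : M.map (starRingEnd ℂ) * M = -1) :
    ∃ A : Matrix (Fin 2) (Fin 2) ℂ, IsUnit A.det ∧
      M = (A.map (starRingEnd ℂ))⁻¹ * !![(0 : ℂ), 1; -1, 0] * A := by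
  have hA : IsUnit (!![1, 0; M 0 0, M 0 1]).det := by
    simpa [det_fin_two_of] using apply_zero_one_ne_zero_of_map_starRingEnd_mul_self_eq_neg_one h
  refine ⟨_, hA, ?_⟩
  rw [mul_assoc, ← map_starRingEnd_mul_eq_J_mul h,
    nonsing_inv_mul_cancel_left _ _ (isUnit_det_map_starRingEnd hA)]

/-- If `M ∈ GL(2,ℂ)` satisfies `conj(M)·M = −I`, and `J = !![0, 1; -1, 0]`, then
`M = conj(A)⁻¹·J·A` for some `A ∈ GL(2,ℂ)`. -/
theorem stmt11 (M : Matrix (Fin 2) (Fin 2) ℂ) (hM : IsUnit M.det)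
    (h : M.map (starRingEnd ℂ) * M = -1) :
    ∃ A : Matrix (Fin 2) (Fin 2) ℂ, IsUnit A.det ∧
      M = (A.map (starRingEnd ℂ))⁻¹ * !![(0 : ℂ), 1; -1, 0] * A :=
  stmt11_general M h
end
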